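/- Let g be a finite simple graph, k a natural number, S ⊆ V(g) nonempty, u ∈ S, v ∈ V(g)\S, and set S′ = S ∪ {v} with |Ē(S′)| ≤ k. Over W = V(g)\S′ define cn = |{w ∈ W : w is adjacent to both u and v}|, cnon = |{w ∈ W : w is adjacent to neither u nor v}|, and xn = |{w ∈ W : w is adjacent to exactly one of u, v}|. Then every k-defective clique C of g with S′ ⊆ C ⊆ V(g) satisfies |C| ≤ |S′| + cn + min(k − |Ē(S′)|, xn) + min(cnon, max(0, ⌊(k − |Ē(S′)| − xn)/2⌋)), where the arithmetic is over the integers (correctness of the second-order reduction rule RR4). -/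

import Mathlib

open Finset

variable {V : Type*} [Fintype V] [DecidableEq V]

/-- The set of non-edges of `S`: unordered pairs of distinct vertices of `S`
that are not adjacent in `G`. -/
def nonEdges (G : SimpleGraph V) [DecidableRel G.Adj] (S : Finset V) : Finset (Sym2 V) :=
  ((S ×ˢ S).filter fun p => p.1 ≠ p.2 ∧ ¬ G.Adj p.1 p.2).image fun p => s(p.1, p.2)

/-- Over `W = V(g) \ (S ∪ {v})`, the number of common neighbors of `u` and `v`. -/
def cn (G : SimpleGraph V) [DecidableRel G.Adj] (S : Finset V) (u v : V) : ℕ :=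
  ((Finset.univ \ insert v S).filter fun w => G.Adj u w ∧ G.Adj v w).card

/-- Over `W = V(g) \ (S ∪ {v})`, the number of common non-neighbors of `u` and `v`. -/
def cnon (G : SimpleGraph V) [DecidableRel G.Adj] (S : Finset V) (u v : V) : ℕ :=
  ((Finset.univ \ insert v S).filter fun w => ¬ G.Adj u w ∧ ¬ G.Adj v w).card

/-- Over `W = V(g) \ (S ∪ {v})`, the number of vertices adjacent to exactly one
of `u` and `v`. -/
def xn (G : SimpleGraph V) [DecidableRel G.Adj] (S : Finset V) (u v : V) : ℕ :=
  ((Finset.univ \ insert v S).filter fun w =>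
    (G.Adj u w ∧ ¬ G.Adj v w) ∨ (¬ G.Adj u w ∧ G.Adj v w)).card

/-!
Let `D = C \ S′`. A vertex of `D` adjacent to neither `u` nor `v` gives two non-edges of `C`
(to `u` and to `v`), one adjacent to exactly one of them gives one, and these non-edges are
distinct and lie outside `Ē(S′)`. So if `x` and `n` count these two kinds of vertices of `D`, then
`|Ē(S′)| + x + 2n ≤ k`, while `x ≤ xn`, `n ≤ cnon` and the remaining vertices of `D` are common
neighbours, at most `cn` of them. Maximising `x + n` under these constraints gives the bound.
-/

section Counting

variable {α : Type*} (s : Finset α) (p q : α → Prop) [DecidablePred p] [DecidablePred q]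

lemma card_eq_card_filter_and_add_card_filter_xor_add_card_filter_nor :
    #s = #(s.filter fun a => p a ∧ q a) + #(s.filter fun a => (p a ∧ ¬ q a) ∨ (¬ p a ∧ q a))
      + #(s.filter fun a => ¬ p a ∧ ¬ q a) := by
  simp only [card_eq_sum_ones s, card_filter, ← sum_add_distrib]
  refine sum_congr rfl fun a _ => ?_
  by_cases p a <;> by_cases q a <;> simp [*]

lemma card_filter_not_add_card_filter_not :
    #(s.filter fun a => ¬ p a) + #(s.filter fun a => ¬ q a)
      = #(s.filter fun a => (p a ∧ ¬ q a) ∨ (¬ p a ∧ q a))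
        + 2 * #(s.filter fun a => ¬ p a ∧ ¬ q a) := by
  simp only [card_filter, mul_sum, ← sum_add_distrib]
  refine sum_congr rfl fun a _ => ?_
  by_cases p a <;> by_cases q a <;> simp [*]

end Counting

section NonEdges

omit [Fintype V]

variable {G : SimpleGraph V} [DecidableRel G.Adj]

lemma mem_nonEdges {T : Finset V} {a b : V} :
    s(a, b) ∈ nonEdges G T ↔ a ∈ T ∧ b ∈ T ∧ a ≠ b ∧ ¬ G.Adj a b := by
  unfold nonEdges
  simp only [mem_image, mem_filter, mem_product, Prod.exists]
  constructor
  · rintro ⟨a', b', ⟨⟨ha, hb⟩, hne, hadj⟩, heq⟩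
    rcases Sym2.eq_iff.mp heq with ⟨rfl, rfl⟩ | ⟨rfl, rfl⟩
    · exact ⟨ha, hb, hne, hadj⟩
    · exact ⟨hb, ha, hne.symm, fun h => hadj h.symm⟩
  · rintro ⟨ha, hb, hne, hadj⟩
    exact ⟨a, b, ⟨⟨ha, hb⟩, hne, hadj⟩, rfl⟩

lemma nonEdges_mono {T C : Finset V} (h : T ⊆ C) : nonEdges G T ⊆ nonEdges G C :=
  image_subset_image (filter_subset_filter _ (product_subset_product h h))

lemma card_nonEdges_add_sum_card_filter_not_adj_le {T C : Finset V} (P : Finset V)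
    (hTC : T ⊆ C) (hPT : P ⊆ T) :
    #(nonEdges G T) + ∑ c ∈ P, #((C \ T).filter fun w => ¬ G.Adj c w) ≤ #(nonEdges G C) := by
  set cross := ((C \ T) ×ˢ P).filter fun p => ¬ G.Adj p.2 p.1
  have hcross : #cross = ∑ c ∈ P, #((C \ T).filter fun w => ¬ G.Adj c w) := by
    simp only [cross, card_filter, sum_product_right]
  have hinj : Set.InjOn (fun p : V × V => s(p.1, p.2)) cross := by
    rintro ⟨w, c⟩ hwc ⟨w', c'⟩ hwc' heq
    simp only [cross, mem_coe, mem_filter, mem_product, mem_sdiff] at hwc hwc'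
    rcases Sym2.eq_iff.mp heq with ⟨rfl, rfl⟩ | ⟨rfl, -⟩
    · rfl
    · exact absurd (hPT hwc'.1.2) hwc.1.1.2
  have hdisj : Disjoint (nonEdges G T) (cross.image fun p => s(p.1, p.2)) := by
    rw [disjoint_right]
    rintro _ he he'
    obtain ⟨⟨w, c⟩, hwc, rfl⟩ := mem_image.mp he
    simp only [cross, mem_filter, mem_product, mem_sdiff] at hwc
    exact hwc.1.1.2 (mem_nonEdges.mp he').1
  have hsub : nonEdges G T ∪ cross.image (fun p => s(p.1, p.2)) ⊆ nonEdges G C := by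
    refine union_subset (nonEdges_mono hTC) fun e he => ?_
    obtain ⟨⟨w, c⟩, hwc, rfl⟩ := mem_image.mp he
    simp only [cross, mem_filter, mem_product, mem_sdiff] at hwc
    obtain ⟨⟨⟨hwC, hwT⟩, hcP⟩, hadj⟩ := hwc
    exact mem_nonEdges.mpr
      ⟨hwC, hTC (hPT hcP), (ne_of_mem_of_not_mem (hPT hcP) hwT).symm, fun h => hadj h.symm⟩
  calc #(nonEdges G T) + ∑ c ∈ P, #((C \ T).filter fun w => ¬ G.Adj c w)
      = #(nonEdges G T ∪ cross.image fun p => s(p.1, p.2)) := by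
        rw [card_union_of_disjoint hdisj, card_image_of_injOn hinj, hcross]
    _ ≤ #(nonEdges G C) := card_le_card hsub

end NonEdges

lemma add_le_min_add_min_max_zero_div_two {x n r a b : ℤ} (hn : 0 ≤ n)
    (hxa : x ≤ a) (hnb : n ≤ b) (h : x + 2 * n ≤ r) :
    x + n ≤ min r a + min b (max 0 ((r - a) / 2)) := by
  omega

theorem rr4_correct_general (G : SimpleGraph V) [DecidableRel G.Adj] (k : ℕ)
    (S : Finset V) (u : V) (hu : u ∈ S) (v : V) (hv : v ∉ S)
    (C : Finset V) (hSC : insert v S ⊆ C) (hC : (nonEdges G C).card ≤ k) :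
    (C.card : ℤ) ≤ ((insert v S).card : ℤ) + (cn G S u v : ℤ)
      + min ((k : ℤ) - ((nonEdges G (insert v S)).card : ℤ)) (xn G S u v : ℤ)
      + min ((cnon G S u v : ℤ))
          (max 0 (((k : ℤ) - ((nonEdges G (insert v S)).card : ℤ) - (xn G S u v : ℤ)) / 2)) := by
  set T := insert v S
  have huv : u ≠ v := ne_of_mem_of_not_mem hu hv
  have hpivots := card_nonEdges_add_sum_card_filter_not_adj_le (G := G) {u, v} hSC
    (insert_subset (mem_insert_of_mem hu) (singleton_subset_iff.mpr (mem_insert_self v S)))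
  rw [sum_pair huv] at hpivots
  set D := C \ T
  have hDW : D ⊆ univ \ T := sdiff_subset_sdiff (subset_univ C) le_rfl
  have hCD : #C = #T + #D := by
    rw [card_sdiff_of_subset hSC, Nat.add_sub_cancel' (card_le_card hSC)]
  have hsplit :=
    card_eq_card_filter_and_add_card_filter_xor_add_card_filter_nor D (G.Adj u) (G.Adj v)
  have hnonAdj := card_filter_not_add_card_filter_not D (G.Adj u) (G.Adj v)
  have hcn : #(D.filter fun w => G.Adj u w ∧ G.Adj v w) ≤ cn G S u v :=
    card_le_card (filter_subset_filter _ hDW)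
  have hxn : #(D.filter fun w => (G.Adj u w ∧ ¬ G.Adj v w) ∨ (¬ G.Adj u w ∧ G.Adj v w))
      ≤ xn G S u v := card_le_card (filter_subset_filter _ hDW)
  have hcnon : #(D.filter fun w => ¬ G.Adj u w ∧ ¬ G.Adj v w) ≤ cnon G S u v :=
    card_le_card (filter_subset_filter _ hDW)
  have := add_le_min_add_min_max_zero_div_two (r := k - #(nonEdges G T))
    (Int.natCast_nonneg _) (Nat.cast_le.mpr hxn) (Nat.cast_le.mpr hcnon)
    (by omega)
  omega

/-- Correctness of the second-order reduction rule RR4: with `S′ = S ∪ {v}` and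
`|Ē(S′)| ≤ k`, every `k`-defective clique `C ⊇ S′` satisfies
`|C| ≤ |S′| + cn + min(k − |Ē(S′)|, xn) + min(cnon, max(0, ⌊(k − |Ē(S′)| − xn)/2⌋))`,
the arithmetic being over the integers. -/
theorem rr4_correct (G : SimpleGraph V) [DecidableRel G.Adj] (k : ℕ)
    (S : Finset V) (hS : S.Nonempty) (u : V) (hu : u ∈ S) (v : V) (hv : v ∉ S)
    (hS' : (nonEdges G (insert v S)).card ≤ k)
    (C : Finset V) (hSC : insert v S ⊆ C) (hC : (nonEdges G C).card ≤ k) :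
    (C.card : ℤ) ≤ ((insert v S).card : ℤ) + (cn G S u v : ℤ)
      + min ((k : ℤ) - ((nonEdges G (insert v S)).card : ℤ)) (xn G S u v : ℤ)
      + min ((cnon G S u v : ℤ))
          (max 0 (((k : ℤ) - ((nonEdges G (insert v S)).card : ℤ) - (xn G S u v : ℤ)) / 2)) :=
  rr4_correct_general G k S u hu v hv C hSC hC
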